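/- For any n×n real symmetric positive definite matrices X and Y, J_vN(X:Y) = 0 if and only if X = Y. -/

import Mathlib

open Matrix

/-- Matrix logarithm of a real symmetric matrix, via the spectral decomposition:
apply the real logarithm to the eigenvalues. (Junk value `0` if not symmetric.) -/
noncomputable def matLog {n : Type*} [Fintype n] [DecidableEq n]
    (A : Matrix n n ℝ) : Matrix n n ℝ :=
  if h : A.IsHermitian then h.cfc Real.log else 0

/-- The von Neumann divergence `D_vN(X‖Y) = Tr(X log X − X log Y − X + Y)`. -/
noncomputable def DvN {n : Type*} [Fintype n] [DecidableEq n]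
    (X Y : Matrix n n ℝ) : ℝ :=
  (X * matLog X - X * matLog Y - X + Y).trace

/-- The symmetric (Jeffery) von Neumann divergence
`J_vN(X:Y) = (1/2)(D_vN(X‖Y) + D_vN(Y‖X))`. -/
noncomputable def JvN {n : Type*} [Fintype n] [DecidableEq n]
    (X Y : Matrix n n ℝ) : ℝ :=
  (1 / 2) * (DvN X Y + DvN Y X)

/-!
Write `X = U diag(λ) Uᵀ`, `Y = V diag(μ) Vᵀ` and `Q = Uᵀ V`. Then
`D(X‖Y) + D(Y‖X) = Tr((X - Y)(log X - log Y)) = ∑ᵢⱼ (λᵢ - μⱼ)(log λᵢ - log μⱼ) Qᵢⱼ²`,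
a sum of nonnegative terms because `log` is increasing. If it vanishes, strict monotonicity
forces `λᵢ = μⱼ` wherever `Qᵢⱼ ≠ 0`, i.e. `diag(λ) Q = Q diag(μ)`, and this says `X = Y`.
-/

lemma Matrix.trace_diagonal_mul_mul_diagonal_mul_star {n : Type*} [Fintype n] [DecidableEq n]
    (d e : n → ℝ) (P : Matrix n n ℝ) :
    (diagonal d * P * diagonal e * star P).trace = ∑ i, ∑ j, d i * e j * P i j ^ 2 := by
  have hentry : ∀ i j, (diagonal d * P * diagonal e) i j = d i * P i j * e j := fun i j => by
    rw [mul_diagonal, diagonal_mul]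
  simp only [trace, diag_apply, mul_apply, hentry, star_apply, star_trivial]
  exact Finset.sum_congr rfl fun i _ => Finset.sum_congr rfl fun j _ => by ring

lemma StrictMonoOn.sub_mul_sub_pos {α : Type*} [Ring α] [LinearOrder α] [IsStrictOrderedRing α]
    {f : α → α} {s : Set α} (hf : StrictMonoOn f s) {a b : α} (ha : a ∈ s) (hb : b ∈ s)
    (hab : a ≠ b) : 0 < (a - b) * (f a - f b) := by
  rcases hab.lt_or_gt with h | h
  · exact mul_pos_of_neg_of_neg (sub_neg.2 h) (sub_neg.2 (hf ha hb h))
  · exact mul_pos (sub_pos.2 h) (sub_pos.2 (hf hb ha h))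

namespace Matrix.IsHermitian

variable {n : Type*} [Fintype n] [DecidableEq n] {A B : Matrix n n ℝ}

noncomputable def eigenvectorOverlap (hA : A.IsHermitian) (hB : B.IsHermitian) :
    Matrix n n ℝ :=
  star (hA.eigenvectorUnitary : Matrix n n ℝ) * hB.eigenvectorUnitary

lemma cfc_eq_mul_diagonal_mul_star (hA : A.IsHermitian) (f : ℝ → ℝ) :
    hA.cfc f = hA.eigenvectorUnitary * diagonal (f ∘ hA.eigenvalues) *
      star (hA.eigenvectorUnitary : Matrix n n ℝ) := by
  simp [IsHermitian.cfc, RCLike.ofReal_real_eq_id]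

lemma cfc_id (hA : A.IsHermitian) : hA.cfc id = A := hA.spectral_theorem.symm

lemma eq_mul_diagonal_mul_star (hA : A.IsHermitian) :
    A = hA.eigenvectorUnitary * diagonal hA.eigenvalues *
      star (hA.eigenvectorUnitary : Matrix n n ℝ) := by
  simpa only [hA.cfc_id, Function.id_comp] using hA.cfc_eq_mul_diagonal_mul_star id

lemma cfc_one (hA : A.IsHermitian) : hA.cfc 1 = 1 := by
  simp [IsHermitian.cfc, Function.comp_def, Pi.one_def]

lemma cfc_mul (hA : A.IsHermitian) (f g : ℝ → ℝ) : hA.cfc (f * g) = hA.cfc f * hA.cfc g := by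
  simp only [IsHermitian.cfc, ← map_mul, diagonal_mul_diagonal]
  rfl

lemma trace_cfc_mul_cfc (hA : A.IsHermitian) (hB : B.IsHermitian) (f g : ℝ → ℝ) :
    (hA.cfc f * hB.cfc g).trace =
      ∑ i, ∑ j, f (hA.eigenvalues i) * g (hB.eigenvalues j) * hA.eigenvectorOverlap hB i j ^ 2 := by
  have hcycle : (hA.cfc f * hB.cfc g).trace = (diagonal (f ∘ hA.eigenvalues) *
      hA.eigenvectorOverlap hB * diagonal (g ∘ hB.eigenvalues) *
        star (hA.eigenvectorOverlap hB)).trace := by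
    simp only [cfc_eq_mul_diagonal_mul_star, eigenvectorOverlap, star_mul, star_star,
      Matrix.mul_assoc]
    rw [trace_mul_comm]
    simp only [Matrix.mul_assoc]
  rw [hcycle, trace_diagonal_mul_mul_diagonal_mul_star]
  rfl

lemma trace_sub_mul_cfc_sub (hA : A.IsHermitian) (hB : B.IsHermitian) (f : ℝ → ℝ) :
    ((A - B) * (hA.cfc f - hB.cfc f)).trace =
      ∑ i, ∑ j, (hA.eigenvalues i - hB.eigenvalues j) *
        (f (hA.eigenvalues i) - f (hB.eigenvalues j)) * hA.eigenvectorOverlap hB i j ^ 2 := by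
  -- Padding with `hA.cfc 1 = 1` or `hB.cfc 1 = 1` brings all four terms to the shape of
  -- `trace_cfc_mul_cfc`, so that they share the overlap matrix of `A` and `B`.
  have hAA : (A * hA.cfc f).trace = (hA.cfc (id * f) * hB.cfc 1).trace := by
    rw [hB.cfc_one, mul_one, hA.cfc_mul, hA.cfc_id]
  have hAB : (A * hB.cfc f).trace = (hA.cfc id * hB.cfc f).trace := by
    rw [hA.cfc_id]
  have hBA : (B * hA.cfc f).trace = (hA.cfc f * hB.cfc id).trace := by
    rw [trace_mul_comm, hB.cfc_id]
  have hBB : (B * hB.cfc f).trace = (hA.cfc 1 * hB.cfc (id * f)).trace := by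
    rw [hA.cfc_one, one_mul, hB.cfc_mul, hB.cfc_id]
  simp only [sub_mul, mul_sub, trace_sub, hAA, hAB, hBA, hBB, trace_cfc_mul_cfc,
    ← Finset.sum_sub_distrib]
  refine Finset.sum_congr rfl fun i _ => Finset.sum_congr rfl fun j _ => ?_
  simp only [Pi.mul_apply, Pi.one_apply, id]
  ring

lemma eq_of_eigenvalues_eq_of_eigenvectorOverlap_ne_zero (hA : A.IsHermitian)
    (hB : B.IsHermitian)
    (h : ∀ i j, hA.eigenvectorOverlap hB i j ≠ 0 → hA.eigenvalues i = hB.eigenvalues j) :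
    A = B := by
  set U : Matrix n n ℝ := ↑hA.eigenvectorUnitary
  set V : Matrix n n ℝ := ↑hB.eigenvectorUnitary
  have hU : U * star U = 1 := Unitary.mul_star_self_of_mem hA.eigenvectorUnitary.2
  have hV : V * star V = 1 := Unitary.mul_star_self_of_mem hB.eigenvectorUnitary.2
  have hcomm : diagonal hA.eigenvalues * hA.eigenvectorOverlap hB =
      hA.eigenvectorOverlap hB * diagonal hB.eigenvalues := by
    ext i j
    rw [diagonal_mul, mul_diagonal]
    by_cases hQ : hA.eigenvectorOverlap hB i j = 0
    · simp [hQ]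
    · rw [h i j hQ, mul_comm]
  have hAV : A * V = V * diagonal hB.eigenvalues := calc
    A * V = U * (diagonal hA.eigenvalues * hA.eigenvectorOverlap hB) := by
      conv_lhs => rw [hA.eq_mul_diagonal_mul_star]
      simp only [eigenvectorOverlap, Matrix.mul_assoc, U, V]
    _ = U * (hA.eigenvectorOverlap hB * diagonal hB.eigenvalues) := by rw [hcomm]
    _ = V * diagonal hB.eigenvalues := by
      rw [eigenvectorOverlap, ← Matrix.mul_assoc, ← Matrix.mul_assoc, hU, Matrix.one_mul]
  calc A = A * V * star V := by rw [Matrix.mul_assoc, hV, Matrix.mul_one]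
    _ = B := by rw [hAV, ← hB.eq_mul_diagonal_mul_star]

lemma eq_of_trace_sub_mul_cfc_sub_eq_zero (hA : A.IsHermitian) (hB : B.IsHermitian)
    {f : ℝ → ℝ} {s : Set ℝ} (hf : StrictMonoOn f s) (hAs : ∀ i, hA.eigenvalues i ∈ s)
    (hBs : ∀ i, hB.eigenvalues i ∈ s) (h : ((A - B) * (hA.cfc f - hB.cfc f)).trace = 0) :
    A = B := by
  refine hA.eq_of_eigenvalues_eq_of_eigenvectorOverlap_ne_zero hB fun i j hQ => ?_
  by_contra hne
  have hterm : ∀ i j, 0 ≤ (hA.eigenvalues i - hB.eigenvalues j) *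
      (f (hA.eigenvalues i) - f (hB.eigenvalues j)) * hA.eigenvectorOverlap hB i j ^ 2 := by
    intro i j
    rcases eq_or_ne (hA.eigenvalues i) (hB.eigenvalues j) with heq | hij
    · simp [heq]
    · exact mul_nonneg (hf.sub_mul_sub_pos (hAs i) (hBs j) hij).le (sq_nonneg _)
  have hpos := Finset.sum_pos' (fun i _ => Finset.sum_nonneg fun j _ => hterm i j)
    ⟨i, Finset.mem_univ i, Finset.sum_pos' (fun j _ => hterm i j)
      ⟨j, Finset.mem_univ j, mul_pos (hf.sub_mul_sub_pos (hAs i) (hBs j) hne) (by positivity)⟩⟩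
  rw [← trace_sub_mul_cfc_sub, h] at hpos
  exact hpos.false

lemma matLog_eq_cfc (hA : A.IsHermitian) : matLog A = hA.cfc Real.log := dif_pos hA

end Matrix.IsHermitian

lemma DvN_add_DvN_eq_trace {n : Type*} [Fintype n] [DecidableEq n] (X Y : Matrix n n ℝ) :
    DvN X Y + DvN Y X = ((X - Y) * (matLog X - matLog Y)).trace := by
  simp only [DvN, sub_mul, mul_sub, trace_sub, trace_add]
  ring

/-- `J_vN(X:Y) = 0` iff `X = Y`. -/
theorem JvN_eq_zero_iff {n : Type*} [Fintype n] [DecidableEq n]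
    (X Y : Matrix n n ℝ) (hX : X.PosDef) (hY : Y.PosDef) :
    JvN X Y = 0 ↔ X = Y := by
  constructor
  · intro h
    have htrace : ((X - Y) * (hX.1.cfc Real.log - hY.1.cfc Real.log)).trace = 0 := by
      rw [← hX.1.matLog_eq_cfc, ← hY.1.matLog_eq_cfc, ← DvN_add_DvN_eq_trace]
      unfold JvN at h
      linarith
    exact hX.1.eq_of_trace_sub_mul_cfc_sub_eq_zero hY.1 Real.strictMonoOn_log
      hX.eigenvalues_pos hY.eigenvalues_pos htrace
  · rintro rfl
    simp [JvN, DvN]
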